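/- Work in the polynomial ring A = ℚ[H, L, S, c₁, c₂, c₃] and set Z₁ = H + 2L, Z₂ = H + 3L, Z₃ = S. Let F : A[E] → A be the A-linear map determined by F(1) = 1, F(E) = F(E²) = 0, and F(Eⁿ) = h_{n−3}(Z₁, Z₂, Z₃)·Z₁Z₂Z₃ for n ≥ 3; and let ν : ℚ[L, S, c₁, c₂, c₃][H] → ℚ[L, S, c₁, c₂, c₃] be the linear map over ℚ[L, S, c₁, c₂, c₃] determined by ν(1) = ν(H) = 0 and ν(H^k) = ((−2)^{k−1} − (−3)^{k−1})·L^{k−2} for k ≥ 2. Set c₂(TY) := (c₂ − c₁L + 12L²) + 3H² + 13HL + E·(−4H − 7L + S). Then ν(F(c₂(TY)²·(3H + 6L − 2E))) = 24L(c₂ − c₁L + 6L²) − 2S(7L − S)². (This is the paper's computation for the SU(2)-model: ∫_Y c₂(TY)² = 24∫_B L(c₂ − c₁L + 6L²) − 2∫_B S(7L − S)², exhibiting the correction μ_{A₁} = −2∫_B S(7L − S)² relative to the smooth Weierstrass model.) -/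

import Mathlib

/-!
Write `c₂(TY) = a + b E` and `[Y] = u - 2E` with `u = 3H + 6L`. Since `F` kills `E` and `E²` and
sends `E³` to `Z₁Z₂Z₃`, only the `E⁰` and `E³` terms of `c₂(TY)² [Y]` survive, so
`F(c₂(TY)² [Y]) = a²u - 2b² Z₁Z₂Z₃`, a quintic in `H` over `ℚ[L, S, c₁, c₂, c₃]`. Applying `ν`
coefficientwise, only `H²,…,H⁵` contribute, with weights `1, -5L, 19L², -65L³`.
-/

namespace SU2ModelC2Squared

/-- The ring `ℚ[L, S, c₁, c₂, c₃]`: variables `0 ↦ L`, `1 ↦ S`, `2 ↦ c₁`, `3 ↦ c₂`, `4 ↦ c₃`. -/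
noncomputable abbrev B : Type := MvPolynomial (Fin 5) ℚ

/-- The ring `A = ℚ[H, L, S, c₁, c₂, c₃]`, realized as `B[H]`. -/
noncomputable abbrev A : Type := Polynomial B

noncomputable def Lb : B := MvPolynomial.X 0
noncomputable def Sb : B := MvPolynomial.X 1
noncomputable def c₁b : B := MvPolynomial.X 2
noncomputable def c₂b : B := MvPolynomial.X 3
noncomputable def c₃b : B := MvPolynomial.X 4

noncomputable def H : A := Polynomial.X
noncomputable def L : A := Polynomial.C Lb
noncomputable def S : A := Polynomial.C Sb
noncomputable def c₁ : A := Polynomial.C c₁b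
noncomputable def c₂ : A := Polynomial.C c₂b

noncomputable def Z₁ : A := H + 2 * L
noncomputable def Z₂ : A := H + 3 * L
noncomputable def Z₃ : A := S

/-- Complete homogeneous symmetric polynomial `h_j(Z₁, Z₂, Z₃)`. -/
noncomputable def hcomp (j : ℕ) : A :=
  ∑ x ∈ Finset.Nat.antidiagonalTuple 3 j, (Z₁ ^ x 0 * Z₂ ^ x 1 * Z₃ ^ x 2)

/-- The `A`-linear map `F : A[E] → A` determined by `F(1) = 1`, `F(E) = F(E²) = 0`, and
`F(Eⁿ) = h_{n−3}(Z₁, Z₂, Z₃)·Z₁Z₂Z₃` for `n ≥ 3`. -/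
noncomputable def F (p : Polynomial A) : A :=
  p.sum fun n a =>
    a * if n = 0 then 1 else if n ≤ 2 then 0 else hcomp (n - 3) * (Z₁ * Z₂ * Z₃)

/-- The linear map `ν : B[H] → B` determined by `ν(1) = ν(H) = 0` and
`ν(H^k) = ((−2)^{k−1} − (−3)^{k−1})·L^{k−2}` for `k ≥ 2`. -/
noncomputable def ν (p : A) : B :=
  p.sum fun k a =>
    a * if k ≤ 1 then 0 else ((-2 : B) ^ (k - 1) - (-3 : B) ^ (k - 1)) * Lb ^ (k - 2)

/-- `c₂(TY) = (c₂ − c₁L + 12L²) + 3H² + 13HL + E·(−4H − 7L + S)` as element of `A[E]`. -/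
noncomputable def c₂TY : Polynomial A :=
  Polynomial.C ((c₂ - c₁ * L + 12 * L ^ 2) + 3 * H ^ 2 + 13 * H * L)
    + Polynomial.X * Polynomial.C (-4 * H - 7 * L + S)

end SU2ModelC2Squared

namespace Polynomial

variable {R : Type*} [Semiring R]

noncomputable def weightedCoeffSum (w : ℕ → R) : R[X] →+ R where
  toFun p := p.sum fun k c => c * w k
  map_zero' := sum_zero_index _
  map_add' p q := sum_add_index p q _ (fun _ => zero_mul _) fun _ _ _ => add_mul _ _ _

theorem weightedCoeffSum_sum_C_mul_X_pow (w : ℕ → R) {n : ℕ} (a : Fin n → R) :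
    weightedCoeffSum w (∑ i, C (a i) * X ^ (i : ℕ)) = ∑ i, a i * w i := by
  rw [map_sum]
  refine Finset.sum_congr rfl fun i _ => ?_
  rw [C_mul_X_pow_eq_monomial]
  exact sum_monomial_index (a i) (fun k c => c * w k) (zero_mul _)

theorem C_add_X_mul_C_sq_mul_C_sub_two_X {R : Type*} [CommRing R] (a b u : R) :
    (C a + X * C b) ^ 2 * (C u - 2 * X) =
      ∑ i : Fin 4, C (![a ^ 2 * u, 2 * a * b * u - 2 * a ^ 2, b ^ 2 * u - 4 * a * b,
        -2 * b ^ 2] i) * X ^ (i : ℕ) := by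
  simp only [Fin.sum_univ_four, Matrix.cons_val, Fin.coe_ofNat_eq_mod, Nat.reduceMod, map_sub,
    map_mul, map_pow, map_neg, map_ofNat]
  ring

end Polynomial

namespace SU2ModelC2Squared

open Polynomial

noncomputable def pushforwardE (n : ℕ) : A :=
  if n = 0 then 1 else if n ≤ 2 then 0 else hcomp (n - 3) * (Z₁ * Z₂ * Z₃)

noncomputable def pushforwardH (k : ℕ) : B :=
  if k ≤ 1 then 0 else ((-2 : B) ^ (k - 1) - (-3 : B) ^ (k - 1)) * Lb ^ (k - 2)

theorem F_eq_weightedCoeffSum (p : Polynomial A) : F p = weightedCoeffSum pushforwardE p := rfl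

theorem ν_eq_weightedCoeffSum (p : A) : ν p = weightedCoeffSum pushforwardH p := rfl

theorem hcomp_zero : hcomp 0 = 1 := by
  simp [hcomp, Finset.Nat.antidiagonalTuple_zero_right]

theorem F_c₂TY_sq_mul_classY :
    F (c₂TY ^ 2 * (C (3 * H + 6 * L) - 2 * X)) =
      ((c₂ - c₁ * L + 12 * L ^ 2) + 3 * H ^ 2 + 13 * H * L) ^ 2 * (3 * H + 6 * L)
        - 2 * (-4 * H - 7 * L + S) ^ 2 * (Z₁ * Z₂ * Z₃) := by
  rw [c₂TY, C_add_X_mul_C_sq_mul_C_sub_two_X, F_eq_weightedCoeffSum,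
    weightedCoeffSum_sum_C_mul_X_pow]
  simp only [Fin.sum_univ_four, Matrix.cons_val, Fin.coe_ofNat_eq_mod, Nat.reduceMod]
  norm_num [pushforwardE, hcomp_zero]
  ring

theorem F_c₂TY_sq_mul_classY_eq_sum_C_mul_X_pow :
    F (c₂TY ^ 2 * (C (3 * H + 6 * L) - 2 * X)) =
      ∑ i : Fin 6, C (![
        6*Lb*c₂b^2 - 12*Lb^2*c₁b*c₂b - 12*Lb^2*Sb^3 + 144*Lb^3*c₂b + 6*Lb^3*c₁b^2
          + 168*Lb^3*Sb^2 - 144*Lb^4*c₁b - 588*Lb^4*Sb + 864*Lb^5,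
        3*c₂b^2 - 6*Lb*c₁b*c₂b - 10*Lb*Sb^3 + 228*Lb^2*c₂b + 3*Lb^2*c₁b^2 + 236*Lb^2*Sb^2
          - 228*Lb^3*c₁b - 1162*Lb^3*Sb + 2304*Lb^4,
        -2*Sb^3 + 114*Lb*c₂b + 108*Lb*Sb^2 - 114*Lb^2*c₁b - 850*Lb^2*Sb + 2382*Lb^3,
        18*c₂b + 16*Sb^2 - 18*Lb*c₁b - 272*Lb*Sb + 1191*Lb^2,
        -32*Sb + 288*Lb,
        27] i) * X ^ (i : ℕ) := by
  rw [F_c₂TY_sq_mul_classY]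
  simp only [Fin.sum_univ_six, Matrix.cons_val, Fin.coe_ofNat_eq_mod, Nat.reduceMod, Z₁, Z₂, Z₃,
    H, L, S, c₁, c₂, map_add, map_sub, map_mul, map_pow, map_neg, map_ofNat]
  ring

/-- For the SU(2)-model,
`∫_Y c₂(TY)² = 24∫_B L(c₂ − c₁L + 6L²) − 2∫_B S(7L − S)²`. -/
theorem su2_c2_squared :
    ν (F (c₂TY ^ 2 * (Polynomial.C (3 * H + 6 * L) - 2 * Polynomial.X))) =
      24 * Lb * (c₂b - c₁b * Lb + 6 * Lb ^ 2) - 2 * Sb * (7 * Lb - Sb) ^ 2 := by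
  rw [F_c₂TY_sq_mul_classY_eq_sum_C_mul_X_pow, ν_eq_weightedCoeffSum,
    weightedCoeffSum_sum_C_mul_X_pow]
  simp only [Fin.sum_univ_six, Matrix.cons_val, Fin.coe_ofNat_eq_mod, Nat.reduceMod]
  norm_num [pushforwardH]
  ring

end SU2ModelC2Squared
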